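/- For the uniform-memory elephant random walk defined by the explicit construction, for every n ≥ 1, almost surely E[η_{n+1} | η_1, …, η_n] = (2p−1) X_n / n. -/

import Mathlib

/-!
Since `K n` takes values in `{1, …, n}`, `η (n+1) = ∑_{k ≤ n} η k · 1{K n = k} β (n+1)`.
Unwinding the recursion, `η 1, …, η n` are functions of `η 1`, `K j` (`j < n`) and `β j`
(`j ≤ n`) only, so they are independent of `(K n, β (n+1))`. Conditioning on them therefore
keeps each `η k` and replaces `1{K n = k} β (n+1)` by its mean `(2p - 1) / n`, which sums to
`(2p - 1) X n / n`.
-/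

open MeasureTheory Filter

/-- The natural filtration generated by the steps `η 1, …, η n`. -/
noncomputable def erwFil {Ω : Type*} (η : ℕ → Ω → ℝ) (n : ℕ) : MeasurableSpace Ω :=
  ⨆ k ∈ Finset.Icc 1 n, MeasurableSpace.comap (η k) Real.measurableSpace

/-- The position of the elephant random walk after `n` steps. -/
noncomputable def erwX {Ω : Type*} (η : ℕ → Ω → ℝ) (n : ℕ) (ω : Ω) : ℝ :=
  ∑ k ∈ Finset.Icc 1 n, η k ω

/-- Index type for the independent sources of randomness of the explicit construction:
the first step `η 1`, the uniform memory indices `(K n)_{n ≥ 1}` and the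
copy/flip variables `(β n)_{n ≥ 2}`. -/
def ERWSourceIdx : Type := Unit ⊕ {n : ℕ // 1 ≤ n} ⊕ {n : ℕ // 2 ≤ n}

/-- Codomains of the independent sources of randomness. -/
def ERWSourceCodom : ERWSourceIdx → Type
  | .inl _ => ℝ
  | .inr (.inl _) => ℕ
  | .inr (.inr _) => ℝ

instance ERWSourceCodomMS : ∀ i, MeasurableSpace (ERWSourceCodom i)
  | .inl _ => Real.measurableSpace
  | .inr (.inl _) => inferInstanceAs (MeasurableSpace ℕ)
  | .inr (.inr _) => Real.measurableSpace

/-- The family of independent sources of randomness, built from `η 1`, `K` and `β`. -/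
def erwSources {Ω : Type*} (η : ℕ → Ω → ℝ) (K : ℕ → Ω → ℕ) (β : ℕ → Ω → ℝ) :
    ∀ i : ERWSourceIdx, Ω → ERWSourceCodom i
  | .inl _ => η 1
  | .inr (.inl n) => K n.1
  | .inr (.inr n) => β n.1

open ProbabilityTheory

section Rademacher

variable {Ω : Type*} [MeasurableSpace Ω] {μ : Measure Ω} [IsProbabilityMeasure μ]
  {f : Ω → ℝ} {q : ℝ}

lemma ae_eq_one_or_eq_neg_one_of_measure_eq (hf : Measurable f)
    (h1 : μ {ω | f ω = 1} = ENNReal.ofReal q) (h2 : μ {ω | f ω = -1} = ENNReal.ofReal (1 - q)) :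
    ∀ᵐ ω ∂μ, f ω = 1 ∨ f ω = -1 := by
  have hB : MeasurableSet {ω | f ω = -1} := hf (measurableSet_singleton _)
  have hdisj : Disjoint {ω | f ω = 1} {ω | f ω = -1} :=
    Set.disjoint_left.mpr fun ω h1 h2 => by norm_num [Set.mem_ofPred_eq.mp h1] at h2
  have hunion : μ ({ω | f ω = 1} ∪ {ω | f ω = -1}) = 1 := by
    refine le_antisymm prob_le_one ?_
    calc (1 : ENNReal) = ENNReal.ofReal (q + (1 - q)) := by norm_num
      _ ≤ ENNReal.ofReal q + ENNReal.ofReal (1 - q) := ENNReal.ofReal_add_le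
      _ = _ := by rw [measure_union hdisj hB, h1, h2]
  exact mem_ae_iff.mpr
    ((prob_compl_eq_zero_iff ((hf (measurableSet_singleton _)).union hB)).mpr hunion)

lemma integral_eq_two_mul_sub_one_of_measure_eq (hf : Measurable f) (hq : 0 ≤ q)
    (h1 : μ {ω | f ω = 1} = ENNReal.ofReal q) (h2 : μ {ω | f ω = -1} = ENNReal.ofReal (1 - q)) :
    ∫ ω, f ω ∂μ = 2 * q - 1 := by
  have hA : MeasurableSet {ω | f ω = 1} := hf (measurableSet_singleton 1)
  have hf_eq : f =ᵐ[μ] fun ω => 2 * {ω | f ω = 1}.indicator 1 ω - 1 := by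
    filter_upwards [ae_eq_one_or_eq_neg_one_of_measure_eq hf h1 h2] with ω h
    rcases h with h | h <;> norm_num [Set.indicator_apply, h]
  have hint : Integrable (fun ω => 2 * {ω | f ω = 1}.indicator (1 : Ω → ℝ) ω) μ :=
    ((integrable_const 1).indicator hA).const_mul 2
  rw [integral_congr_ae hf_eq, integral_sub hint (integrable_const 1), integral_const_mul,
    integral_indicator_one hA, measureReal_def, h1, ENNReal.toReal_ofReal hq]
  simp

lemma ae_abs_eq_one_of_measure_eq (hf : Measurable f)
    (h1 : μ {ω | f ω = 1} = ENNReal.ofReal q) (h2 : μ {ω | f ω = -1} = ENNReal.ofReal (1 - q)) :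
    ∀ᵐ ω ∂μ, |f ω| = 1 :=
  (ae_eq_one_or_eq_neg_one_of_measure_eq hf h1 h2).mono fun _ h => (abs_eq zero_le_one).mpr h

end Rademacher

lemma ProbabilityTheory.IndepFun.integral_indicator_preimage {Ω β : Type*} [MeasurableSpace Ω]
    [MeasurableSpace β] {μ : Measure Ω} {X : Ω → ℝ} {Y : Ω → β} (hXY : IndepFun X Y μ)
    (hX : AEStronglyMeasurable X μ) (hY : Measurable Y) {t : Set β} (ht : MeasurableSet t) :
    ∫ ω, (Y ⁻¹' t).indicator X ω ∂μ = (∫ ω, X ω ∂μ) * μ.real (Y ⁻¹' t) := by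
  have hind : Measurable (t.indicator (1 : β → ℝ)) := measurable_const.indicator ht
  have h := (hXY.comp measurable_id hind).integral_fun_mul_eq_mul_integral hX
    (hind.comp hY).aestronglyMeasurable
  have hpre : ∀ ω, t.indicator (1 : β → ℝ) (Y ω) = (Y ⁻¹' t).indicator 1 ω := fun ω => by
    by_cases hω : Y ω ∈ t <;> simp [hω]
  have hmul : ∀ ω, X ω * (Y ⁻¹' t).indicator 1 ω = (Y ⁻¹' t).indicator X ω := fun ω => by
    by_cases hω : Y ω ∈ t <;> simp [hω]
  simpa only [Function.comp_apply, id, hpre, hmul, integral_indicator_one (hY ht)] using h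

section CondExp

variable {Ω ι : Type*} {m m' mΩ : MeasurableSpace Ω} {μ : Measure Ω} [IsFiniteMeasure μ]

lemma condExp_mul_of_indep (hm' : m' ≤ mΩ) (hm : m ≤ mΩ) (hindep : Indep m' m μ)
    {f g : Ω → ℝ} (hf : StronglyMeasurable[m] f) (hg : StronglyMeasurable[m'] g)
    (hfg : Integrable (f * g) μ) (hg_int : Integrable g μ) :
    μ[f * g | m] =ᵐ[μ] fun ω => f ω * ∫ ω', g ω' ∂μ := by
  filter_upwards [condExp_mul_of_stronglyMeasurable_left hf hfg hg_int,
    condExp_indep_eq hm' hm hg hindep] with ω h1 h2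
  rw [h1, Pi.mul_apply, h2]

lemma condExp_sum_mul_of_indep (hm' : m' ≤ mΩ) (hm : m ≤ mΩ) (hindep : Indep m' m μ)
    {s : Finset ι} {f g : ι → Ω → ℝ} (hf : ∀ i ∈ s, StronglyMeasurable[m] (f i))
    (hg : ∀ i ∈ s, StronglyMeasurable[m'] (g i)) (hfg : ∀ i ∈ s, Integrable (f i * g i) μ)
    (hg_int : ∀ i ∈ s, Integrable (g i) μ) :
    μ[∑ i ∈ s, f i * g i | m] =ᵐ[μ] fun ω => ∑ i ∈ s, f i ω * ∫ ω', g i ω' ∂μ := by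
  have hterms := (s.eventually_all).mpr fun i hi =>
    condExp_mul_of_indep hm' hm hindep (hf i hi) (hg i hi) (hfg i hi) (hg_int i hi)
  filter_upwards [condExp_finsetSum hfg m, hterms] with ω hsum hω
  rw [hsum, Finset.sum_apply]
  exact Finset.sum_congr rfl hω

end CondExp

section ElephantRandomWalk

variable {Ω : Type*} {η : ℕ → Ω → ℝ} {K : ℕ → Ω → ℕ} {β : ℕ → Ω → ℝ}

lemma erw_step_eq_sum {n : ℕ} (hK : ∀ ω, K n ω ∈ Finset.Icc 1 n)
    (hrec : ∀ ω, η (n + 1) ω = β (n + 1) ω * η (K n ω) ω) :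
    η (n + 1) = ∑ k ∈ Finset.Icc 1 n, η k * (K n ⁻¹' {k}).indicator (β (n + 1)) := by
  ext ω
  rw [hrec, Finset.sum_apply, Finset.sum_eq_single_of_mem _ (hK ω)]
  · simp [mul_comm]
  · intro k _ hk
    simp [Ne.symm hk]

lemma measurable_erw_step {m : MeasurableSpace Ω} {n : ℕ}
    (hKrange : ∀ j, 1 ≤ j → ∀ ω, K j ω ∈ Finset.Icc 1 j)
    (hrec : ∀ j, 1 ≤ j → ∀ ω, η (j + 1) ω = β (j + 1) ω * η (K j ω) ω)
    (hη1 : Measurable[m] (η 1)) (hK : ∀ j, 1 ≤ j → j < n → Measurable[m] (K j))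
    (hβ : ∀ j, 2 ≤ j → j ≤ n → Measurable[m] (β j)) :
    ∀ k, 1 ≤ k → k ≤ n → Measurable[m] (η k) := by
  intro k
  induction k using Nat.strong_induction_on with
  | _ k ih =>
    intro hk1 hkn
    obtain rfl | ⟨j, hj, rfl⟩ : k = 1 ∨ ∃ j, 1 ≤ j ∧ k = j + 1 :=
      by rcases k with _ | _ | j <;> simp_all
    · exact hη1
    rw [erw_step_eq_sum (hKrange j hj) (hrec j hj), Finset.sum_fn]
    refine Finset.measurable_sum _ fun i hi => ?_
    obtain ⟨hi1, hij⟩ := Finset.mem_Icc.mp hi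
    exact (ih i (by omega) hi1 (by omega)).mul ((hβ (j + 1) (by omega) hkn).indicator
      (hK j hj (by omega) (measurableSet_singleton i)))

lemma ae_abs_erw_step_eq_one [MeasurableSpace Ω] {μ : Measure Ω}
    (hKrange : ∀ j, 1 ≤ j → ∀ ω, K j ω ∈ Finset.Icc 1 j)
    (hrec : ∀ j, 1 ≤ j → ∀ ω, η (j + 1) ω = β (j + 1) ω * η (K j ω) ω)
    (hη1 : ∀ᵐ ω ∂μ, |η 1 ω| = 1) (hβ : ∀ j, 2 ≤ j → ∀ᵐ ω ∂μ, |β j ω| = 1) :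
    ∀ k, 1 ≤ k → ∀ᵐ ω ∂μ, |η k ω| = 1 := by
  intro k
  induction k using Nat.strong_induction_on with
  | _ k ih =>
    intro hk1
    obtain rfl | ⟨j, hj, rfl⟩ : k = 1 ∨ ∃ j, 1 ≤ j ∧ k = j + 1 :=
      by rcases k with _ | _ | j <;> simp_all
    · exact hη1
    have hpast : ∀ᵐ ω ∂μ, ∀ i ∈ Finset.Icc 1 j, |η i ω| = 1 :=
      (Finset.eventually_all _).mpr fun i hi => by
        obtain ⟨hi1, hij⟩ := Finset.mem_Icc.mp hi
        exact ih i (by omega) hi1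
    filter_upwards [hβ (j + 1) (by omega), hpast] with ω hβω hω
    rw [hrec j hj, abs_mul, hβω, hω _ (hKrange j hj ω), one_mul]

/-- The sources of randomness that determine `η 1, …, η n`. -/
def erwPastIdx (n : ℕ) : Set ERWSourceIdx
  | .inl _ => True
  | .inr (.inl k) => k.1 < n
  | .inr (.inr k) => k.1 ≤ n

lemma indep_nextStep_erwFil [MeasurableSpace Ω] {μ : Measure Ω} (hη1 : Measurable (η 1))
    (hKm : ∀ n, Measurable (K n)) (hβm : ∀ n, Measurable (β n))
    (hKrange : ∀ j, 1 ≤ j → ∀ ω, K j ω ∈ Finset.Icc 1 j)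
    (hrec : ∀ j, 1 ≤ j → ∀ ω, η (j + 1) ω = β (j + 1) ω * η (K j ω) ω)
    (hindep : iIndepFun (m := ERWSourceCodomMS) (erwSources η K β) μ) {n : ℕ} (hn : 1 ≤ n) :
    Indep (MeasurableSpace.comap (K n) inferInstance ⊔
      MeasurableSpace.comap (β (n + 1)) inferInstance) (erwFil η n) μ := by
  set cm := fun i => MeasurableSpace.comap (erwSources η K β i) (ERWSourceCodomMS i)
  have hle : ∀ i, cm i ≤ ‹MeasurableSpace Ω› := by
    rintro (_ | k | k)
    exacts [hη1.comap_le, (hKm _).comap_le, (hβm _).comap_le]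
  have hmeas : ∀ (s : Set ERWSourceIdx) i, i ∈ s →
      Measurable[⨆ i ∈ s, cm i] (erwSources η K β i) :=
    fun _ i hi => measurable_iff_comap_le.mpr (le_biSup cm hi)
  refine indep_of_indep_of_le_left
    (indep_of_indep_of_le_right (indep_biSup_compl hle hindep (erwPastIdx n)).symm ?_) ?_
  · refine iSup₂_le fun k hk => ?_
    obtain ⟨hk1, hkn⟩ := Finset.mem_Icc.mp hk
    exact (measurable_erw_step hKrange hrec (hmeas (erwPastIdx n) (.inl ()) trivial)
      (fun j hj hjn => hmeas _ (.inr (.inl ⟨j, hj⟩)) hjn)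
      (fun j hj hjn => hmeas _ (.inr (.inr ⟨j, hj⟩)) hjn) k hk1 hkn).comap_le
  · exact sup_le (hmeas (erwPastIdx n)ᶜ (.inr (.inl ⟨n, hn⟩)) (lt_irrefl n)).comap_le
      (hmeas (erwPastIdx n)ᶜ (.inr (.inr ⟨n + 1, by omega⟩)) (Nat.not_succ_le_self n)).comap_le

lemma measurable_erwFil {n k : ℕ} (hk : k ∈ Finset.Icc 1 n) :
    Measurable[erwFil η n] (η k) :=
  measurable_iff_comap_le.mpr (le_biSup (fun k => MeasurableSpace.comap (η k) _) hk)

lemma erwFil_le [MeasurableSpace Ω] (hη : ∀ k, Measurable (η k)) (n : ℕ) :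
    erwFil η n ≤ ‹MeasurableSpace Ω› :=
  iSup₂_le fun k _ => (hη k).comap_le

lemma integral_memory_indicator_eq [MeasurableSpace Ω] {μ : Measure Ω} [IsProbabilityMeasure μ]
    {p : ℝ} (hp : 0 ≤ p) (hKm : ∀ n, Measurable (K n)) (hβm : ∀ n, Measurable (β n))
    (hindep : iIndepFun (m := ERWSourceCodomMS) (erwSources η K β) μ) {n k : ℕ} (hn : 1 ≤ n)
    (hK : μ {ω | K n ω = k} = 1 / n) (hβ1 : μ {ω | β (n + 1) ω = 1} = ENNReal.ofReal p)
    (hβ2 : μ {ω | β (n + 1) ω = -1} = ENNReal.ofReal (1 - p)) :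
    ∫ ω, (K n ⁻¹' {k}).indicator (β (n + 1)) ω ∂μ = (2 * p - 1) / n := by
  have hβK : IndepFun (β (n + 1)) (K n) μ :=
    hindep.indepFun (i := .inr (.inr ⟨n + 1, by omega⟩)) (j := .inr (.inl ⟨n, hn⟩))
      (fun h => by injection h with h; injection h)
  rw [hβK.integral_indicator_preimage (hβm _).aestronglyMeasurable (hKm n)
    (measurableSet_singleton k), integral_eq_two_mul_sub_one_of_measure_eq (hβm _) hp hβ1 hβ2,
    measureReal_def, show K n ⁻¹' {k} = {ω | K n ω = k} from rfl, hK]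
  simp [div_eq_mul_inv]

end ElephantRandomWalk

open ProbabilityTheory in
theorem erw_explicit_conditional_expectation_general
    {Ω : Type*} [MeasurableSpace Ω] (μ : Measure Ω) [IsProbabilityMeasure μ]
    (p r : ℝ) (hp : p ∈ Set.Icc (0 : ℝ) 1)
    (η : ℕ → Ω → ℝ) (K : ℕ → Ω → ℕ) (β : ℕ → Ω → ℝ)
    (hηm : ∀ k, Measurable (η k)) (hKm : ∀ n, Measurable (K n))
    (hβm : ∀ n, Measurable (β n))
    (hη1 : μ {ω | η 1 ω = 1} = ENNReal.ofReal r ∧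
      μ {ω | η 1 ω = -1} = ENNReal.ofReal (1 - r))
    (hKrange : ∀ n, 1 ≤ n → ∀ ω, K n ω ∈ Finset.Icc 1 n)
    (hKunif : ∀ n, 1 ≤ n → ∀ k ∈ Finset.Icc 1 n, μ {ω | K n ω = k} = 1 / n)
    (hβlaw : ∀ n, 2 ≤ n → μ {ω | β n ω = 1} = ENNReal.ofReal p ∧
      μ {ω | β n ω = -1} = ENNReal.ofReal (1 - p))
    (hindep : iIndepFun (m := ERWSourceCodomMS) (erwSources η K β) μ)
    (hrec : ∀ n, 1 ≤ n → ∀ ω, η (n + 1) ω = β (n + 1) ω * η (K n ω) ω)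
    (n : ℕ) (hn : 1 ≤ n) :
    μ[η (n + 1)|erwFil η n] =ᵐ[μ] fun ω => (2 * p - 1) * erwX η n ω / n := by
  have hβ_abs : ∀ j, 2 ≤ j → ∀ᵐ ω ∂μ, |β j ω| = 1 := fun j hj =>
    ae_abs_eq_one_of_measure_eq (hβm j) (hβlaw j hj).1 (hβlaw j hj).2
  have hη_abs := ae_abs_erw_step_eq_one hKrange hrec
    (ae_abs_eq_one_of_measure_eq (hηm 1) hη1.1 hη1.2) hβ_abs
  set g : ℕ → Ω → ℝ := fun k => (K n ⁻¹' {k}).indicator (β (n + 1))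
  have hg_int : ∀ k, Integrable (g k) μ := fun k =>
    (Integrable.of_bound (hβm _).aestronglyMeasurable 1
      ((hβ_abs (n + 1) (by omega)).mono fun _ h => h.le)).indicator
      (hKm n (measurableSet_singleton k))
  have hg_integral : ∀ k ∈ Finset.Icc 1 n, ∫ ω, g k ω ∂μ = (2 * p - 1) / n := fun k hk =>
    integral_memory_indicator_eq hp.1 hKm hβm hindep hn (hKunif n hn k hk)
      (hβlaw (n + 1) (by omega)).1 (hβlaw (n + 1) (by omega)).2
  rw [erw_step_eq_sum (hKrange n hn) (hrec n hn)]
  refine (condExp_sum_mul_of_indep (sup_le (hKm n).comap_le (hβm _).comap_le) (erwFil_le hηm n)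
    (indep_nextStep_erwFil (hηm 1) hKm hβm hKrange hrec hindep hn)
    (fun k hk => (measurable_erwFil hk).stronglyMeasurable)
    (fun k _ => ((measurable_iff_comap_le.mpr le_sup_right).indicator
      (measurable_iff_comap_le.mpr le_sup_left (measurableSet_singleton k))).stronglyMeasurable)
    (fun k hk => (hg_int k).bdd_mul (c := 1) (hηm k).aestronglyMeasurable
      ((hη_abs k (Finset.mem_Icc.mp hk).1).mono fun _ h => h.le))
    (fun k _ => hg_int k)).trans (Eventually.of_forall fun ω => ?_)
  show ∑ k ∈ _, η k ω * ∫ ω', g k ω' ∂μ = (2 * p - 1) * erwX η n ω / n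
  rw [Finset.sum_congr rfl fun k hk => by rw [hg_integral k hk], ← Finset.sum_mul, erwX]
  ring

open ProbabilityTheory in
/-- Explicit construction of the uniform-memory ERW: `η 1`, `(K n)_{n ≥ 1}` and
`(β n)_{n ≥ 2}` mutually independent, `P(η 1 = 1) = r = 1 - P(η 1 = -1)`, `K n` uniform
on `{1, …, n}`, `P(β n = 1) = p = 1 - P(β n = -1)`, and `η (n+1) = β (n+1) * η (K n)`.
Then for every `n ≥ 1`, almost surely `E[η (n+1) | η 1, …, η n] = (2p-1) X n / n`. -/
theorem erw_explicit_conditional_expectation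
    {Ω : Type*} [MeasurableSpace Ω] (μ : Measure Ω) [IsProbabilityMeasure μ]
    (p r : ℝ) (hp : p ∈ Set.Icc (0 : ℝ) 1) (hr : r ∈ Set.Icc (0 : ℝ) 1)
    (η : ℕ → Ω → ℝ) (K : ℕ → Ω → ℕ) (β : ℕ → Ω → ℝ)
    (hηm : ∀ k, Measurable (η k)) (hKm : ∀ n, Measurable (K n))
    (hβm : ∀ n, Measurable (β n))
    (hη1 : μ {ω | η 1 ω = 1} = ENNReal.ofReal r ∧
      μ {ω | η 1 ω = -1} = ENNReal.ofReal (1 - r))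
    (hKrange : ∀ n, 1 ≤ n → ∀ ω, K n ω ∈ Finset.Icc 1 n)
    (hKunif : ∀ n, 1 ≤ n → ∀ k ∈ Finset.Icc 1 n, μ {ω | K n ω = k} = 1 / n)
    (hβlaw : ∀ n, 2 ≤ n → μ {ω | β n ω = 1} = ENNReal.ofReal p ∧
      μ {ω | β n ω = -1} = ENNReal.ofReal (1 - p))
    (hindep : iIndepFun (m := ERWSourceCodomMS) (erwSources η K β) μ)
    (hrec : ∀ n, 1 ≤ n → ∀ ω, η (n + 1) ω = β (n + 1) ω * η (K n ω) ω)
    (n : ℕ) (hn : 1 ≤ n) :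
    μ[η (n + 1)|erwFil η n] =ᵐ[μ] fun ω => (2 * p - 1) * erwX η n ω / n :=
  erw_explicit_conditional_expectation_general μ p r hp η K β hηm hKm hβm hη1 hKrange hKunif hβlaw
    hindep hrec n hn
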